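/- arXiv:1906.03254 — 7 statements merged into one kernel-verified Lean document; each statement's English description precedes it below -/
import Mathlib

section
/- Let k ∈ ℝ, l ≥ 1 a natural number, and let f : ℝⁿ → ℝ be C^l on ℝⁿ \ {0} and positively homogeneous of degree k (f(t • x) = t^k · f(x) for all t > 0 and x ≠ 0). Then for every v ≠ 0 and every X ∈ ℝⁿ, the l-th iterated derivative satisfies D^l f(v)(v, X, …, X) = (k − l + 1) · D^{l−1} f(v)(X, …, X), where one argument of D^l f(v) is v and the remaining l − 1 arguments are X. -/
/-!
Since `y ↦ t • y` is a linear automorphism, `D^m (f ∘ (t • ·)) = t^m D^m f (t • ·)` holds with no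
regularity assumption, so homogeneity of degree `k` of `f` on the open cone `x ≠ 0` makes `D^m f`
homogeneous of degree `k - m` there. The identity is then Euler's relation
`D g(v) v = (k - l + 1) g(v)` for `g = D^{l-1} f`, obtained by differentiating `t ↦ g (t • v)` at
`t = 1`.
-/

open Filter Topology

section

variable {𝕜 E F : Type*} [NontriviallyNormedField 𝕜] [NormedAddCommGroup E] [NormedSpace 𝕜 E]
  [NormedAddCommGroup F] [NormedSpace 𝕜 F]

theorem iteratedFDeriv_comp_const_smul_of_ne_zero (f : E → F) {a : 𝕜} (ha : a ≠ 0) (m : ℕ)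
    (x : E) :
    iteratedFDeriv 𝕜 m (fun z => f (a • z)) x = a ^ m • iteratedFDeriv 𝕜 m f (a • x) := by
  let g : E ≃L[𝕜] E := ContinuousLinearEquiv.smulLeft (Units.mk0 a ha)
  have hcomp := g.iteratedFDerivWithin_comp_right f uniqueDiffOn_univ (Set.mem_univ (g x)) m
  rw [Set.preimage_univ, iteratedFDerivWithin_univ, iteratedFDerivWithin_univ] at hcomp
  ext y
  rw [show (fun z => f (a • z)) = f ∘ g from rfl, hcomp,
    ContinuousMultilinearMap.compContinuousLinearMap_apply]
  simp [g, Units.smul_def, ContinuousMultilinearMap.map_smul_univ]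

theorem iteratedFDeriv_fun_const_smul (f : E → F) (c : 𝕜) (m : ℕ) (x : E) :
    iteratedFDeriv 𝕜 m (fun z => c • f z) x = c • iteratedFDeriv 𝕜 m f x := by
  rcases eq_or_ne c 0 with rfl | hc
  · simp
  · let g : F ≃L[𝕜] F := ContinuousLinearEquiv.smulLeft (Units.mk0 c hc)
    have hg : ⇑g = (c • ·) := rfl
    ext y
    simpa [hg, Function.comp_def] using
      congrArg (fun A => A y) (g.iteratedFDeriv_comp_left (f := f) (x := x) (i := m))

theorem iteratedFDeriv_smul_of_eventuallyEq {f : E → F} {x : E} {a c : 𝕜} (ha : a ≠ 0)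
    (h : (fun z => f (a • z)) =ᶠ[𝓝 x] fun z => c • f z) (m : ℕ) :
    a ^ m • iteratedFDeriv 𝕜 m f (a • x) = c • iteratedFDeriv 𝕜 m f x := by
  rw [← iteratedFDeriv_comp_const_smul_of_ne_zero f ha, ← iteratedFDeriv_fun_const_smul]
  exact (h.iteratedFDeriv 𝕜 m).eq_of_nhds

end

section

variable {E F : Type*} [NormedAddCommGroup E] [NormedSpace ℝ E] [NormedAddCommGroup F]
  [NormedSpace ℝ F]

theorem iteratedFDeriv_smul_of_posHomogeneous {f : E → F} {x : E} {k : ℝ}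
    (hf : ∀ t : ℝ, 0 < t → ∀ᶠ y in 𝓝 x, f (t • y) = t ^ k • f y) (m : ℕ) {t : ℝ} (ht : 0 < t) :
    iteratedFDeriv ℝ m f (t • x) = t ^ (k - m) • iteratedFDeriv ℝ m f x := by
  have h := iteratedFDeriv_smul_of_eventuallyEq ht.ne' (hf t ht) m
  rw [Real.rpow_sub ht, Real.rpow_natCast, div_eq_inv_mul, mul_smul, ← h, inv_smul_smul₀]
  exact pow_ne_zero m ht.ne'

theorem fderiv_apply_self_of_posHomogeneous {g : E → F} {x : E} {a : ℝ}
    (hg : DifferentiableAt ℝ g x) (hhom : ∀ t : ℝ, 0 < t → g (t • x) = t ^ a • g x) :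
    fderiv ℝ g x x = a • g x := by
  have hray : HasDerivAt (fun t : ℝ => g (t • x)) (fderiv ℝ g x x) 1 := by
    have hline : HasDerivAt (fun t : ℝ => t • x) x 1 := by
      simpa using (hasDerivAt_id (1 : ℝ)).smul_const x
    rw [← one_smul ℝ x] at hg
    simpa [Function.comp_def] using hg.hasFDerivAt.comp_hasDerivAt 1 hline
  have hpow : HasDerivAt (fun t : ℝ => t ^ a • g x) (a • g x) 1 := by
    simpa using (Real.hasDerivAt_rpow_const (x := 1) (p := a) (Or.inl one_ne_zero)).smul_const (g x)
  refine hray.unique (hpow.congr_of_eventuallyEq ?_)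
  filter_upwards [Ioi_mem_nhds one_pos] with t ht using hhom t ht

end

/-- For a function `f : ℝⁿ → ℝ` of class `C^l` away from the origin which is positively
homogeneous of degree `k`, the `l`-th iterated derivative satisfies the identity
`D^l f(v)(v, X, …, X) = (k − l + 1) · D^{l−1} f(v)(X, …, X)` for every `v ≠ 0` and every `X`.
(The paper's identity `δ̂ ⌟ Θ_l = (k − l + 1) Θ_{l−1}`.) -/
theorem iteratedFDeriv_radial_contraction (n : ℕ) (k : ℝ) (l : ℕ) (hl : 1 ≤ l)
    (f : (Fin n → ℝ) → ℝ)
    (hf : ContDiffOn ℝ l f {x | x ≠ 0})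
    (hhom : ∀ t : ℝ, 0 < t → ∀ x : Fin n → ℝ, x ≠ 0 → f (t • x) = t ^ k * f x)
    (v : Fin n → ℝ) (hv : v ≠ 0) (X : Fin n → ℝ) :
    iteratedFDeriv ℝ l f v (Function.update (fun _ : Fin l => X) ⟨0, hl⟩ v) =
      (k - l + 1) * iteratedFDeriv ℝ (l - 1) f v (fun _ : Fin (l - 1) => X) := by
  obtain ⟨m, rfl⟩ : ∃ m, l = m + 1 := ⟨l - 1, by omega⟩
  have hnhds : {x : Fin n → ℝ | x ≠ 0} ∈ 𝓝 v := isOpen_compl_singleton.mem_nhds hv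
  have hdiff : DifferentiableAt ℝ (iteratedFDeriv ℝ m f) v :=
    (hf.contDiffAt hnhds).differentiableAt_iteratedFDeriv (by norm_cast; omega)
  have hhom_near : ∀ t : ℝ, 0 < t → ∀ᶠ y in 𝓝 v, f (t • y) = t ^ k • f y := fun t ht =>
    Filter.mem_of_superset hnhds fun y hy => hhom t ht y hy
  have euler := fderiv_apply_self_of_posHomogeneous hdiff
    fun t ht => iteratedFDeriv_smul_of_posHomogeneous hhom_near m ht
  have htail : Fin.tail (Function.update (fun _ : Fin (m + 1) => X) 0 v) = fun _ => X := by
    funext i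
    simp [Fin.tail, Fin.succ_ne_zero]
  rw [show (⟨0, hl⟩ : Fin (m + 1)) = 0 from rfl, iteratedFDeriv_succ_apply_left,
    Function.update_self, htail, euler]
  simp only [Nat.add_one_sub_one, smul_apply, smul_eq_mul]
  push_cast
  ring
end

section
/- Let k ∈ ℝ with k ≠ 0 and k ≠ 1, and let f : ℝⁿ → ℝ be C² on ℝⁿ \ {0} and positively homogeneous of degree k. Let v ≠ 0 with f(v) ≠ 0. Then for a vector X ∈ ℝⁿ the following are equivalent: (i) D²f(v)(X, Y) = 0 for every Y ∈ ℝⁿ; (ii) Df(v)(X) = 0 and D²f(v)(X, Y) = 0 for every Y ∈ ℝⁿ with Df(v)(Y) = 0. -/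
/-!
Euler's identity `Df(x) x = k f(x)`, applied to `f` and to `Df` (which is homogeneous of degree
`k - 1`), together with the symmetry of `D²f(v)`, gives `D²f(v)(X, v) = (k - 1) Df(v)(X)` and
`Df(v)(v) = k f(v) ≠ 0`. So `ℝⁿ = ker Df(v) ⊕ ℝ v`, and the linear form `D²f(v)(X, ·)` vanishes
iff it vanishes on `ker Df(v)` and at `v`, i.e. iff additionally `Df(v)(X) = 0` (as `k ≠ 1`).
-/

theorem Module.Dual.forall_apply_eq_zero_iff {K V : Type*} [Field K] [AddCommGroup V]
    [Module K V] {φ ℓ : Module.Dual K V} {v : V} (hv : ℓ v ≠ 0) :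
    (∀ y, φ y = 0) ↔ φ v = 0 ∧ ∀ y, ℓ y = 0 → φ y = 0 := by
  refine ⟨fun h => ⟨h v, fun y _ => h y⟩, fun ⟨hφv, hker⟩ y => ?_⟩
  have hproj : ℓ (y - (ℓ y / ℓ v) • v) = 0 := by
    simp [div_mul_cancel₀ _ hv]
  calc φ y = φ (y - (ℓ y / ℓ v) • v) + (ℓ y / ℓ v) * φ v := by simp
    _ = 0 := by simp [hker _ hproj, hφv]

def IsPosHomogeneous {E F : Type*} [AddCommGroup E] [Module ℝ E] [AddCommGroup F] [Module ℝ F]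
    (k : ℝ) (f : E → F) : Prop :=
  ∀ t : ℝ, 0 < t → ∀ x, x ≠ 0 → f (t • x) = t ^ k • f x

section

variable {E F : Type*} [NormedAddCommGroup E] [NormedSpace ℝ E] [NormedAddCommGroup F]
  [NormedSpace ℝ F] {k : ℝ} {f : E → F}

theorem IsPosHomogeneous.fderiv_apply_self (hf : IsPosHomogeneous k f) {v : E} (hv : v ≠ 0)
    (hd : DifferentiableAt ℝ f v) : fderiv ℝ f v v = k • f v := by
  have hray : HasDerivAt (fun t : ℝ => f (t • v)) (fderiv ℝ f v v) 1 := by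
    have hline : HasDerivAt (fun t : ℝ => t • v) v 1 := by
      simpa using (hasDerivAt_id (1 : ℝ)).smul_const v
    rw [← one_smul ℝ v] at hd
    simpa [Function.comp_def] using hd.hasFDerivAt.comp_hasDerivAt 1 hline
  have hpow : HasDerivAt (fun t : ℝ => t ^ k • f v) (k • f v) 1 := by
    simpa using (Real.hasDerivAt_rpow_const (x := 1) (p := k) (Or.inl one_ne_zero)).smul_const
      (f v)
  have heq : (fun t : ℝ => f (t • v)) =ᶠ[nhds 1] fun t => t ^ k • f v := by
    filter_upwards [Ioi_mem_nhds one_pos] with t ht using hf t ht v hv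
  exact (hpow.congr_of_eventuallyEq heq).unique hray |>.symm

theorem IsPosHomogeneous.fderiv_sub_one (hf : IsPosHomogeneous k f)
    (hd : ∀ x, x ≠ 0 → DifferentiableAt ℝ f x) :
    IsPosHomogeneous (k - 1) (fderiv ℝ f) := by
  intro t ht x hx
  have htx : t • x ≠ 0 := smul_ne_zero ht.ne' hx
  have hscaled : HasFDerivAt (fun y => f (t • y)) (t • fderiv ℝ f (t • x)) x := by
    have hcomp : (fderiv ℝ f (t • x)).comp (t • ContinuousLinearMap.id ℝ E) =
        t • fderiv ℝ f (t • x) := by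
      ext w
      simp
    exact hcomp ▸ (hd _ htx).hasFDerivAt.comp x ((hasFDerivAt_id x).const_smul t)
  have heq : (fun y => t ^ k • f y) =ᶠ[nhds x] fun y => f (t • y) := by
    filter_upwards [isOpen_ne.mem_nhds hx] with y hy using (hf t ht y hy).symm
  have hderiv : t • fderiv ℝ f (t • x) = t ^ k • fderiv ℝ f x :=
    (hscaled.congr_of_eventuallyEq heq).unique ((hd x hx).hasFDerivAt.const_smul (t ^ k))
  calc fderiv ℝ f (t • x) = t⁻¹ • t • fderiv ℝ f (t • x) := by rw [inv_smul_smul₀ ht.ne']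
    _ = t ^ (k - 1) • fderiv ℝ f x := by
      rw [hderiv, smul_smul, Real.rpow_sub_one ht.ne', div_eq_inv_mul]

theorem IsPosHomogeneous.fderiv_fderiv_apply_self (hf : IsPosHomogeneous k f)
    (hC : ∀ x, x ≠ 0 → ContDiffAt ℝ 2 f x) {v : E} (hv : v ≠ 0) (X : E) :
    fderiv ℝ (fderiv ℝ f) v X v = (k - 1) • fderiv ℝ f v X := by
  have hd : ∀ x, x ≠ 0 → DifferentiableAt ℝ f x := fun x hx =>
    (hC x hx).differentiableAt two_ne_zero
  have hd' : DifferentiableAt ℝ (fderiv ℝ f) v :=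
    ((hC v hv).fderiv_right (m := 1) le_rfl).differentiableAt one_ne_zero
  rw [(hC v hv).isSymmSndFDerivAt (by simp) X v, (hf.fderiv_sub_one hd).fderiv_apply_self hv hd',
    smul_apply]

end

/-- For a `C²` function `f : ℝⁿ → ℝ` away from the origin, positively homogeneous of degree
`k` with `k ≠ 0`, `k ≠ 1`, and a point `v ≠ 0` with `f(v) ≠ 0`, a vector `X` lies in the
kernel of the Hessian `D²f(v)` if and only if `Df(v)(X) = 0` and `D²f(v)(X, Y) = 0` for all
`Y` with `Df(v)(Y) = 0`.  (Regularity of `Θ₂` is equivalent to regularity of `Θ₂⁰`.) -/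
theorem kernel_hessian_iff (n : ℕ) (k : ℝ) (hk0 : k ≠ 0) (hk1 : k ≠ 1)
    (f : (Fin n → ℝ) → ℝ)
    (hf : ContDiffOn ℝ 2 f {x | x ≠ 0})
    (hhom : ∀ t : ℝ, 0 < t → ∀ x : Fin n → ℝ, x ≠ 0 → f (t • x) = t ^ k * f x)
    (v : Fin n → ℝ) (hv : v ≠ 0) (hfv : f v ≠ 0) (X : Fin n → ℝ) :
    (∀ Y : Fin n → ℝ, iteratedFDeriv ℝ 2 f v ![X, Y] = 0) ↔
      (fderiv ℝ f v X = 0 ∧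
        ∀ Y : Fin n → ℝ, fderiv ℝ f v Y = 0 → iteratedFDeriv ℝ 2 f v ![X, Y] = 0) := by
  have hf_hom : IsPosHomogeneous k f := hhom
  have hC : ∀ x : Fin n → ℝ, x ≠ 0 → ContDiffAt ℝ 2 f x := fun x hx =>
    hf.contDiffAt (isOpen_ne.mem_nhds hx)
  have hDfv : fderiv ℝ f v v ≠ 0 := by
    rw [hf_hom.fderiv_apply_self hv ((hC v hv).differentiableAt two_ne_zero), smul_eq_mul]
    exact mul_ne_zero hk0 hfv
  have hHess := hf_hom.fderiv_fderiv_apply_self hC hv X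
  simp only [iteratedFDeriv_two_apply, Matrix.cons_val_zero, Matrix.cons_val_one]
  refine (Module.Dual.forall_apply_eq_zero_iff (φ := (fderiv ℝ (fderiv ℝ f) v X).toLinearMap)
    (ℓ := (fderiv ℝ f v).toLinearMap) hDfv).trans (and_congr_left' ?_)
  rw [ContinuousLinearMap.coe_coe, hHess, smul_eq_mul, mul_eq_zero,
    or_iff_right (sub_ne_zero.mpr hk1)]
end

section
/- Let k ∈ ℝ and let f : ℝⁿ → ℝ be C² on ℝⁿ \ {0} and positively homogeneous of degree k. Let v ≠ 0 with k · f(v) ≠ 0. Then for every X ∈ ℝⁿ, writing X₀ = X − (Df(v)(X)/(k · f(v))) · v, one has D²f(v)(X, X) = D²f(v)(X₀, X₀) + ((k − 1)/(k · f(v))) · (Df(v)(X))². -/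
/-!
Differentiating `f (t • x) = t ^ k * f x` at `t = 1` gives Euler's identity `Df(x) x = k f(x)`, and
differentiating it in `x` shows that `Df` is homogeneous of degree `k - 1`; Euler's identity for `Df`
then reads `D²f(v)(v, ·) = (k - 1) Df(v)`. Expanding the symmetric form `D²f(v)` at
`X₀ = X - c v` with `c = Df(v)(X) / (k f(v))`, the cross terms are `-2c(k-1) Df(v)(X)` and the
radial term is `c²(k-1) k f(v)`, which sum to `-((k-1)/(k f(v))) Df(v)(X)²`.
-/

open Topology

section Homogeneous

variable {E F : Type*} [NormedAddCommGroup E] [NormedSpace ℝ E]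
  [NormedAddCommGroup F] [NormedSpace ℝ F]

def PosHomogeneous (k : ℝ) (f : E → F) : Prop :=
  ∀ t : ℝ, 0 < t → ∀ x : E, x ≠ 0 → f (t • x) = t ^ k • f x

namespace PosHomogeneous

variable {k : ℝ} {f : E → F}

theorem fderiv_apply_self (hhom : PosHomogeneous k f) {x : E} (hx : x ≠ 0)
    (hf : DifferentiableAt ℝ f x) : fderiv ℝ f x x = k • f x := by
  have hray : HasDerivAt (fun t : ℝ => f (t • x)) (fderiv ℝ f x x) 1 := by
    have hsmul : HasDerivAt (fun t : ℝ => t • x) x 1 := by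
      simpa using (hasDerivAt_id (1 : ℝ)).smul_const x
    exact (by simpa using hf.hasFDerivAt : HasFDerivAt f (fderiv ℝ f x) ((1 : ℝ) • x))
      |>.comp_hasDerivAt 1 hsmul
  have hpow : HasDerivAt (fun t : ℝ => t ^ k • f x) (k • f x) 1 := by
    simpa using (Real.hasDerivAt_rpow_const (p := k) (Or.inl one_ne_zero)).smul_const (f x)
  have heq : (fun t : ℝ => f (t • x)) =ᶠ[𝓝 1] fun t => t ^ k • f x := by
    filter_upwards [eventually_gt_nhds zero_lt_one] with t ht
    exact hhom t ht x hx
  exact (hray.congr_of_eventuallyEq heq.symm).unique hpow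

theorem fderiv (hhom : PosHomogeneous k f) (hf : DifferentiableOn ℝ f {x | x ≠ 0}) :
    PosHomogeneous (k - 1) (_root_.fderiv ℝ f) := by
  intro t ht x hx
  have hopen : IsOpen {x : E | x ≠ 0} := isOpen_compl_singleton
  have hdiff : ∀ y : E, y ≠ 0 → DifferentiableAt ℝ f y := fun y hy =>
    hf.differentiableAt (hopen.mem_nhds hy)
  have hcomp : HasFDerivAt (fun y => f (t • y)) ((_root_.fderiv ℝ f (t • x)).comp
      (t • ContinuousLinearMap.id ℝ E)) x :=
    (hdiff _ (smul_ne_zero ht.ne' hx)).hasFDerivAt.comp x ((hasFDerivAt_id x).const_smul t)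
  have heq : (fun y => f (t • y)) =ᶠ[𝓝 x] fun y => t ^ k • f y := by
    filter_upwards [hopen.mem_nhds hx] with y hy
    exact hhom t ht y hy
  have hchain := (hcomp.congr_of_eventuallyEq heq.symm).unique
    ((hdiff x hx).hasFDerivAt.const_smul (t ^ k))
  ext Y
  have hY := congrArg (fun L : E →L[ℝ] F => L Y) hchain
  simp only [ContinuousLinearMap.comp_apply, smul_apply, ContinuousLinearMap.coe_id', id_eq,
    map_smul] at hY
  rw [smul_apply, Real.rpow_sub_one ht.ne', div_eq_inv_mul, mul_smul, ← hY,
    inv_smul_smul₀ ht.ne']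

end PosHomogeneous

end Homogeneous

theorem ContinuousLinearMap.apply_self_eq_apply_sub_smul_add
    {𝕜 E : Type*} [NontriviallyNormedField 𝕜] [NormedAddCommGroup E] [NormedSpace 𝕜 E]
    {B : E →L[𝕜] E →L[𝕜] 𝕜} {L : E →L[𝕜] 𝕜} {v : E} {a b : 𝕜}
    (hB : ∀ x y, B x y = B y x) (hBv : B v = a • L) (hLv : L v = b) (X : E) :
    B X X = B (X - (L X / b) • v) (X - (L X / b) • v) + a / b * L X ^ 2 := by
  rcases eq_or_ne b 0 with rfl | hb
  · simp -- `L X / 0 = 0` and `a / 0 = 0`, so both sides are `B X X`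
  have hvX : B v X = a * L X := by simp [hBv]
  have hXv : B X v = a * L X := by rw [hB, hvX]
  have hvv : B v v = a * b := by simp [hBv, hLv]
  simp only [map_sub, map_smul, sub_apply, smul_apply, smul_eq_mul, hvX, hXv, hvv]
  field_simp
  ring

theorem hessian_splitting_general (n : ℕ) (k : ℝ) (f : (Fin n → ℝ) → ℝ)
    (hf : ContDiffOn ℝ 2 f {x | x ≠ 0})
    (hhom : ∀ t : ℝ, 0 < t → ∀ x : Fin n → ℝ, x ≠ 0 → f (t • x) = t ^ k * f x)
    (v : Fin n → ℝ) (hv : v ≠ 0) (X : Fin n → ℝ) :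
    iteratedFDeriv ℝ 2 f v ![X, X] =
      iteratedFDeriv ℝ 2 f v
        ![X - (fderiv ℝ f v X / (k * f v)) • v, X - (fderiv ℝ f v X / (k * f v)) • v] +
      ((k - 1) / (k * f v)) * (fderiv ℝ f v X) ^ 2 := by
  have hhom : PosHomogeneous k f := hhom
  have hfv : ContDiffAt ℝ 2 f v := hf.contDiffAt (isOpen_compl_singleton.mem_nhds hv)
  have hDf : DifferentiableAt ℝ (fderiv ℝ f) v :=
    (hfv.fderiv_right (m := 1) (by norm_num)).differentiableAt one_ne_zero
  have hradial : fderiv ℝ (fderiv ℝ f) v v = (k - 1) • fderiv ℝ f v :=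
    (hhom.fderiv (hf.differentiableOn two_ne_zero)).fderiv_apply_self hv hDf
  simp only [iteratedFDeriv_two_apply, Matrix.cons_val_zero, Matrix.cons_val_one]
  have heuler : fderiv ℝ f v v = k * f v :=
    hhom.fderiv_apply_self hv (hfv.differentiableAt two_ne_zero)
  exact ContinuousLinearMap.apply_self_eq_apply_sub_smul_add
    (hfv.isSymmSndFDerivAt (by simp)) hradial heuler X

/-- Splitting of the second differential of a homogeneous function along `ker Θ₁` and the
radial direction:  `D²f(v)(X, X) = D²f(v)(X₀, X₀) + ((k−1)/(k·f(v)))·(Df(v)(X))²`, where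
`X₀ = X − (Df(v)(X)/(k·f(v)))·v`. -/
theorem hessian_splitting (n : ℕ) (k : ℝ) (f : (Fin n → ℝ) → ℝ)
    (hf : ContDiffOn ℝ 2 f {x | x ≠ 0})
    (hhom : ∀ t : ℝ, 0 < t → ∀ x : Fin n → ℝ, x ≠ 0 → f (t • x) = t ^ k * f x)
    (v : Fin n → ℝ) (hv : v ≠ 0) (hkf : k * f v ≠ 0) (X : Fin n → ℝ) :
    iteratedFDeriv ℝ 2 f v ![X, X] =
      iteratedFDeriv ℝ 2 f v
        ![X - (fderiv ℝ f v X / (k * f v)) • v, X - (fderiv ℝ f v X / (k * f v)) • v] +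
      ((k - 1) / (k * f v)) * (fderiv ℝ f v X) ^ 2 :=
  hessian_splitting_general n k f hf hhom v hv X
end

section
/- Let l ∈ ℕ, let h : ℝ² → ℝ be C^l, and let A : ℝ² → ℝ² be a linear map. Then for every x ∈ ℝ²: W_l(h ∘ A)(x) = (det A)^l · W_l(h)(A x). In particular K₂(h ∘ A)(x) = (det A)² · K₂(h)(A x) and K₃(h ∘ A)(x) = (det A)³ · K₃(h)(A x) when h is C² (resp. C³). -/
/-!
By the chain rule `∇(h ∘ A)(x) = Aᵀ ∇h(A x)`, and the quarter-turn `J` satisfies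
`A J Aᵀ = (det A) J`; hence `A w_{h∘A}(x) = (det A) w_h(A x)`. Since
`D^l(h ∘ A)(x)(v, …, v) = D^l h(A x)(A v, …, A v)`, multilinearity produces the factor
`(det A)^l`. `K₂` and `K₃` are `W₂` and `W₃` expanded in the standard basis, where the mixed
partials are merged using the symmetry of second and third derivatives.
-/

/-- First partial derivative of `h : ℝ² → ℝ` in the `i`-th coordinate direction. -/
noncomputable def pd1 (h : (Fin 2 → ℝ) → ℝ) (i : Fin 2) (x : Fin 2 → ℝ) : ℝ :=
  fderiv ℝ h x (Pi.single i 1)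

/-- Second partial derivative of `h : ℝ² → ℝ`. -/
noncomputable def pd2 (h : (Fin 2 → ℝ) → ℝ) (i j : Fin 2) (x : Fin 2 → ℝ) : ℝ :=
  iteratedFDeriv ℝ 2 h x ![Pi.single i 1, Pi.single j 1]

/-- Third partial derivative of `h : ℝ² → ℝ`. -/
noncomputable def pd3 (h : (Fin 2 → ℝ) → ℝ) (i j m : Fin 2) (x : Fin 2 → ℝ) : ℝ :=
  iteratedFDeriv ℝ 3 h x ![Pi.single i 1, Pi.single j 1, Pi.single m 1]

/-- The rotated gradient `w_h(x) = (h₂(x), −h₁(x))`. -/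
noncomputable def wrot (h : (Fin 2 → ℝ) → ℝ) (x : Fin 2 → ℝ) : Fin 2 → ℝ :=
  ![pd1 h 1 x, -pd1 h 0 x]

/-- `W_l(h)(x) = (1/l!)·D^l h(x)(w_h(x), …, w_h(x))`. -/
noncomputable def Wl (l : ℕ) (h : (Fin 2 → ℝ) → ℝ) (x : Fin 2 → ℝ) : ℝ :=
  (1 / l.factorial : ℝ) * iteratedFDeriv ℝ l h x (fun _ => wrot h x)

/-- `K₂(h) = (1/2)(h₁₁h₂² − 2h₁₂h₁h₂ + h₂₂h₁²)`. -/
noncomputable def K2 (h : (Fin 2 → ℝ) → ℝ) (x : Fin 2 → ℝ) : ℝ :=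
  (1 / 2) * (pd2 h 0 0 x * (pd1 h 1 x) ^ 2 - 2 * pd2 h 0 1 x * pd1 h 0 x * pd1 h 1 x +
    pd2 h 1 1 x * (pd1 h 0 x) ^ 2)

/-- `K₃(h) = (1/6)(h₁₁₁h₂³ − 3h₁₁₂h₂²h₁ + 3h₁₂₂h₂h₁² − h₂₂₂h₁³)`. -/
noncomputable def K3 (h : (Fin 2 → ℝ) → ℝ) (x : Fin 2 → ℝ) : ℝ :=
  (1 / 6) * (pd3 h 0 0 0 x * (pd1 h 1 x) ^ 3 -
    3 * pd3 h 0 0 1 x * (pd1 h 1 x) ^ 2 * pd1 h 0 x +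
    3 * pd3 h 0 1 1 x * pd1 h 1 x * (pd1 h 0 x) ^ 2 -
    pd3 h 1 1 1 x * (pd1 h 0 x) ^ 3)

local notation "𝐞" i:max => (Pi.single i (1 : ℝ) : Fin 2 → ℝ)

theorem eq_smul_single_add_smul_single (v : Fin 2 → ℝ) : v = v 0 • 𝐞 0 + v 1 • 𝐞 1 := by
  ext i; fin_cases i <;> simp

def rotCovector (φ : Module.Dual ℝ (Fin 2 → ℝ)) : Fin 2 → ℝ := ![φ (𝐞 1), -φ (𝐞 0)]

theorem LinearMap.det_fin_two (A : (Fin 2 → ℝ) →ₗ[ℝ] (Fin 2 → ℝ)) :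
    LinearMap.det A = A (𝐞 0) 0 * A (𝐞 1) 1 - A (𝐞 1) 0 * A (𝐞 0) 1 := by
  rw [← LinearMap.det_toMatrix (Pi.basisFun ℝ (Fin 2)), Matrix.det_fin_two]
  simp

theorem apply_rotCovector_comp (A : (Fin 2 → ℝ) →ₗ[ℝ] (Fin 2 → ℝ))
    (φ : Module.Dual ℝ (Fin 2 → ℝ)) :
    A (rotCovector (φ ∘ₗ A)) = LinearMap.det A • rotCovector φ := by
  have hφ (v : Fin 2 → ℝ) : φ v = v 0 * φ (𝐞 0) + v 1 * φ (𝐞 1) := by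
    conv_lhs => rw [eq_smul_single_add_smul_single v]
    simp
  rw [eq_smul_single_add_smul_single (rotCovector _)]
  ext i
  fin_cases i <;> simp [rotCovector, LinearMap.det_fin_two] <;>
    rw [hφ (A (𝐞 0)), hφ (A (𝐞 1))] <;> ring

theorem wrot_eq_rotCovector (h : (Fin 2 → ℝ) → ℝ) (x : Fin 2 → ℝ) :
    wrot h x = rotCovector (fderiv ℝ h x : Module.Dual ℝ (Fin 2 → ℝ)) := rfl

theorem apply_wrot_comp {h : (Fin 2 → ℝ) → ℝ} (A : (Fin 2 → ℝ) →ₗ[ℝ] (Fin 2 → ℝ))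
    {x : Fin 2 → ℝ} (hd : DifferentiableAt ℝ h (A x)) :
    A (wrot (fun y => h (A y)) x) = LinearMap.det A • wrot h (A x) := by
  have hfd : fderiv ℝ (fun y => h (A y)) x
      = (fderiv ℝ h (A x)).comp (LinearMap.toContinuousLinearMap A) := by
    rw [← ContinuousLinearMap.fderiv (f := LinearMap.toContinuousLinearMap A) (x := x)]
    exact fderiv_comp (g := h) x hd (LinearMap.toContinuousLinearMap A).differentiableAt
  rw [wrot_eq_rotCovector, wrot_eq_rotCovector, hfd, ← apply_rotCovector_comp]
  rfl

theorem Wl_comp_linearMap (l : ℕ) {h : (Fin 2 → ℝ) → ℝ} (A : (Fin 2 → ℝ) →ₗ[ℝ] (Fin 2 → ℝ))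
    (hh : ContDiff ℝ l h) (x : Fin 2 → ℝ) :
    Wl l (fun y => h (A y)) x = LinearMap.det A ^ l * Wl l h (A x) := by
  rcases l.eq_zero_or_pos with rfl | hl
  · simp [Wl]
  have hd : DifferentiableAt ℝ h (A x) :=
    (hh.differentiable (by exact_mod_cast hl.ne')).differentiableAt
  have hchain : iteratedFDeriv ℝ l (fun y => h (A y)) x (fun _ => wrot (fun y => h (A y)) x)
      = iteratedFDeriv ℝ l h (A x) (fun _ => A (wrot (fun y => h (A y)) x)) := by
    rw [show (fun y => h (A y)) = h ∘ LinearMap.toContinuousLinearMap A from rfl,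
      (LinearMap.toContinuousLinearMap A).iteratedFDeriv_comp_right hh x le_rfl]
    rfl
  rw [Wl, Wl, hchain, apply_wrot_comp A hd,
    (iteratedFDeriv ℝ l h (A x)).map_smul_univ (fun _ => LinearMap.det A)]
  simp only [Finset.prod_const, Finset.card_univ, Fintype.card_fin, smul_eq_mul]
  ring

section ThirdDerivative

variable {E F : Type*} [NormedAddCommGroup E] [NormedSpace ℝ E]
  [NormedAddCommGroup F] [NormedSpace ℝ F] {f : E → F}

theorem iteratedFDeriv_three_apply (f : E → F) (x : E) (m : Fin 3 → E) :
    iteratedFDeriv ℝ 3 f x m = fderiv ℝ (fderiv ℝ (fderiv ℝ f)) x (m 0) (m 1) (m 2) := by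
  rw [iteratedFDeriv_succ_apply_right, iteratedFDeriv_two_apply]
  rfl

theorem fderiv_fderiv_fderiv_swap_left (hf : ContDiff ℝ 3 f) (x u v w : E) :
    fderiv ℝ (fderiv ℝ (fderiv ℝ f)) x u v w = fderiv ℝ (fderiv ℝ (fderiv ℝ f)) x v u w := by
  have hf' : ContDiffAt ℝ 2 (fderiv ℝ f) x := (hf.fderiv_right (by norm_num)).contDiffAt
  rw [(hf'.isSymmSndFDerivAt (by norm_num)).eq u v]

theorem fderiv_fderiv_fderiv_swap_right (hf : ContDiff ℝ 3 f) (x u v w : E) :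
    fderiv ℝ (fderiv ℝ (fderiv ℝ f)) x u v w = fderiv ℝ (fderiv ℝ (fderiv ℝ f)) x u w v := by
  have hd : Differentiable ℝ (iteratedFDeriv ℝ 2 f) :=
    hf.differentiable_iteratedFDeriv (by norm_num)
  have hsymm :
      (fun y => iteratedFDeriv ℝ 2 f y ![v, w]) = fun y => iteratedFDeriv ℝ 2 f y ![w, v] :=
    funext fun y => (hf.contDiffAt.isSymmSndFDerivAt (by norm_num)).iteratedFDeriv_cons
  calc fderiv ℝ (fderiv ℝ (fderiv ℝ f)) x u v w
      = fderiv ℝ (iteratedFDeriv ℝ 2 f) x u ![v, w] :=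
        (iteratedFDeriv_three_apply f x ![u, v, w]).symm.trans (iteratedFDeriv_succ_apply_left _)
    _ = fderiv ℝ (iteratedFDeriv ℝ 2 f) x u ![w, v] := by
        rw [← fderiv_continuousMultilinear_apply_const_apply (hd x),
          ← fderiv_continuousMultilinear_apply_const_apply (hd x), hsymm]
    _ = fderiv ℝ (fderiv ℝ (fderiv ℝ f)) x u w v :=
        (iteratedFDeriv_succ_apply_left _).symm.trans (iteratedFDeriv_three_apply f x ![u, w, v])

end ThirdDerivative

section Expansion

variable {F : Type*} [NormedAddCommGroup F] [NormedSpace ℝ F]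

theorem ContinuousLinearMap.apply_apply_fin_two
    (T : (Fin 2 → ℝ) →L[ℝ] (Fin 2 → ℝ) →L[ℝ] F) (u v : Fin 2 → ℝ) :
    T u v = (u 0 * v 0) • T (𝐞 0) (𝐞 0) + (u 0 * v 1) • T (𝐞 0) (𝐞 1)
      + (u 1 * v 0) • T (𝐞 1) (𝐞 0) + (u 1 * v 1) • T (𝐞 1) (𝐞 1) := by
  conv_lhs => rw [eq_smul_single_add_smul_single u, eq_smul_single_add_smul_single v]
  simp only [map_add, map_smul, add_apply, smul_apply]
  module

theorem ContinuousLinearMap.apply_apply_apply_fin_two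
    (T : (Fin 2 → ℝ) →L[ℝ] (Fin 2 → ℝ) →L[ℝ] (Fin 2 → ℝ) →L[ℝ] F) (u v w : Fin 2 → ℝ) :
    T u v w
      = (u 0 * v 0 * w 0) • T (𝐞 0) (𝐞 0) (𝐞 0) + (u 0 * v 0 * w 1) • T (𝐞 0) (𝐞 0) (𝐞 1)
      + (u 0 * v 1 * w 0) • T (𝐞 0) (𝐞 1) (𝐞 0) + (u 0 * v 1 * w 1) • T (𝐞 0) (𝐞 1) (𝐞 1)
      + (u 1 * v 0 * w 0) • T (𝐞 1) (𝐞 0) (𝐞 0) + (u 1 * v 0 * w 1) • T (𝐞 1) (𝐞 0) (𝐞 1)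
      + (u 1 * v 1 * w 0) • T (𝐞 1) (𝐞 1) (𝐞 0) + (u 1 * v 1 * w 1) • T (𝐞 1) (𝐞 1) (𝐞 1) := by
  conv_lhs => rw [eq_smul_single_add_smul_single u, eq_smul_single_add_smul_single v,
    eq_smul_single_add_smul_single w]
  simp only [map_add, map_smul, add_apply, smul_apply]
  module

end Expansion

theorem Wl_two_eq_K2 {h : (Fin 2 → ℝ) → ℝ} {x : Fin 2 → ℝ} (hh : ContDiffAt ℝ 2 h x) :
    Wl 2 h x = K2 h x := by
  have h10 := (hh.isSymmSndFDerivAt (by norm_num)).eq (𝐞 1) (𝐞 0)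
  simp only [Wl, K2, pd2, iteratedFDeriv_two_apply, Matrix.cons_val_zero, Matrix.cons_val_one]
  rw [ContinuousLinearMap.apply_apply_fin_two, h10]
  simp only [wrot, pd1, Matrix.cons_val_zero, Matrix.cons_val_one, smul_eq_mul,
    Nat.factorial_two]
  ring

theorem Wl_three_eq_K3 {h : (Fin 2 → ℝ) → ℝ} {x : Fin 2 → ℝ} (hh : ContDiff ℝ 3 h) :
    Wl 3 h x = K3 h x := by
  have swap_left := fderiv_fderiv_fderiv_swap_left hh x
  have swap_right := fderiv_fderiv_fderiv_swap_right hh x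
  -- bring every mixed third partial to the sorted index order used in `K3`
  have s010 := swap_right (𝐞 0) (𝐞 1) (𝐞 0)
  have s100 := (swap_left (𝐞 1) (𝐞 0) (𝐞 0)).trans s010
  have s101 := swap_left (𝐞 1) (𝐞 0) (𝐞 1)
  have s110 := (swap_right (𝐞 1) (𝐞 1) (𝐞 0)).trans s101
  simp only [Wl, K3, pd3, iteratedFDeriv_three_apply, Matrix.cons_val_zero, Matrix.cons_val_one,
    Matrix.cons_val_two, Matrix.head_cons, Matrix.tail_cons]
  rw [ContinuousLinearMap.apply_apply_apply_fin_two]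
  simp only [s010, s100, s101, s110, wrot, pd1, Matrix.cons_val_zero, Matrix.cons_val_one,
    smul_eq_mul, Nat.factorial]
  ring

/-- Relative `GL(2)`-invariance of `W_l`: `W_l(h∘A)(x) = (det A)^l · W_l(h)(Ax)`; in
particular `K₂(h∘A) = (det A)²·K₂(h)∘A` and `K₃(h∘A) = (det A)³·K₃(h)∘A` when `h` is `C²`
(resp. `C³`). -/
theorem Wl_relative_invariance (l : ℕ) (h : (Fin 2 → ℝ) → ℝ)
    (A : (Fin 2 → ℝ) →ₗ[ℝ] (Fin 2 → ℝ)) (hh : ContDiff ℝ l h) (x : Fin 2 → ℝ) :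
    Wl l (fun y => h (A y)) x = (LinearMap.det A) ^ l * Wl l h (A x) ∧
    (ContDiff ℝ 2 h → K2 (fun y => h (A y)) x = (LinearMap.det A) ^ 2 * K2 h (A x)) ∧
    (ContDiff ℝ 3 h → K3 (fun y => h (A y)) x = (LinearMap.det A) ^ 3 * K3 h (A x)) := by
  have hcomp {n : ℕ} (hn : ContDiff ℝ n h) : ContDiff ℝ n (fun y => h (A y)) :=
    hn.comp (LinearMap.toContinuousLinearMap A).contDiff
  refine ⟨Wl_comp_linearMap l A hh x, fun h2 => ?_, fun h3 => ?_⟩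
  · rw [← Wl_two_eq_K2 (hcomp h2).contDiffAt, Wl_comp_linearMap 2 A h2 x,
      Wl_two_eq_K2 h2.contDiffAt]
  · rw [← Wl_three_eq_K3 (hcomp h3), Wl_comp_linearMap 3 A h3 x, Wl_three_eq_K3 h3]
end

section
/- Let h : ℝ² → ℝ be C³, let A : ℝ² → ℝ² be an invertible linear map, and let x ∈ ℝ² satisfy K₂(h)(A x) ≠ 0. Then A(λ̂(h ∘ A)(x)) = λ̂(h)(A x), where λ̂(h)(x) = (3·K₃(h)(x)/(2·K₂(h)(x)²)) · w_h(x). -/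
/-- The paper's invariant vector field `λ̂(h)(x) = (3K₃(h)(x)/(2K₂(h)(x)²))·w_h(x)`. -/
noncomputable def lamhat (h : (Fin 2 → ℝ) → ℝ) (x : Fin 2 → ℝ) : Fin 2 → ℝ :=
  (3 * K3 h x / (2 * (K2 h x) ^ 2)) • wrot h x

/-! With `w = w_h(y)`, symmetry of the derivatives turns the defining formulas into
`K₂(h)(y) = D²h(y)(w, w) / 2` and `K₃(h)(y) = D³h(y)(w, w, w) / 6`. By the chain rule,
`Dⁿ(h ∘ A)(x)(v, …, v) = Dⁿh(Ax)(Av, …, Av)`, and `A w_{h∘A}(x) = det A · w_h(Ax)` because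
`A J Aᵀ = det A · J` for the quarter-turn `J`. Hence `K₂` and `K₃` pick up the factors `(det A)²`
and `(det A)³`, which cancel against the factor `det A` of `w` in `λ̂ = 3K₃ / (2K₂²) · w`. -/

theorem ContinuousMultilinearMap.map_smul_const {R ι M N : Type*} [Fintype ι] [CommSemiring R]
    [AddCommMonoid M] [Module R M] [TopologicalSpace M] [AddCommMonoid N] [Module R N]
    [TopologicalSpace N] (f : ContinuousMultilinearMap R (fun _ : ι => M) N) (c : R) (v : M) :
    f (fun _ => c • v) = c ^ Fintype.card ι • f (fun _ => v) := by
  simpa using f.map_smul_univ (fun _ => c) (fun _ => v)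

theorem iteratedFDeriv_three_apply_s12 {𝕜 E F : Type*} [NontriviallyNormedField 𝕜]
    [NormedAddCommGroup E] [NormedSpace 𝕜 E] [NormedAddCommGroup F] [NormedSpace 𝕜 F]
    (h : E → F) (y : E) (m : Fin 3 → E) :
    iteratedFDeriv 𝕜 3 h y m = fderiv 𝕜 (fderiv 𝕜 (fderiv 𝕜 h)) y (m 0) (m 1) (m 2) := by
  rw [iteratedFDeriv_succ_apply_right, iteratedFDeriv_two_apply]
  rfl

section RealDerivatives

variable {E F G : Type*} [NormedAddCommGroup E] [NormedSpace ℝ E] [NormedAddCommGroup F]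
  [NormedSpace ℝ F] [NormedAddCommGroup G] [NormedSpace ℝ G]

theorem iteratedFDeriv_comp_linearMap_apply_const [FiniteDimensional ℝ G] {n : ℕ} {h : E → F}
    (hh : ContDiff ℝ n h) (A : G →ₗ[ℝ] E) (x v : G) :
    iteratedFDeriv ℝ n (fun y => h (A y)) x (fun _ => v) =
      iteratedFDeriv ℝ n h (A x) (fun _ => A v) := by
  have := A.toContinuousLinearMap.iteratedFDeriv_comp_right hh x le_rfl
  simpa [Function.comp_def] using congr($this fun _ => v)

theorem fderiv_fderiv_fderiv_comm_left {h : E → F} (hh : ContDiff ℝ 3 h) (y u v w : E) :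
    fderiv ℝ (fderiv ℝ (fderiv ℝ h)) y u v w = fderiv ℝ (fderiv ℝ (fderiv ℝ h)) y v u w :=
  congr($(((hh.fderiv_right (m := 2) (by norm_num)).contDiffAt.isSymmSndFDerivAt
    (by simp)).eq u v) w)

theorem fderiv_fderiv_fderiv_comm_right {h : E → F} (hh : ContDiff ℝ 3 h) (y u v w : E) :
    fderiv ℝ (fderiv ℝ (fderiv ℝ h)) y u v w = fderiv ℝ (fderiv ℝ (fderiv ℝ h)) y u w v := by
  have hflip : fderiv ℝ (fderiv ℝ h) =
      ContinuousLinearMap.flipₗᵢ ℝ E E F ∘ fderiv ℝ (fderiv ℝ h) := by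
    funext z; ext v w
    exact (hh.contDiffAt.isSymmSndFDerivAt (by simp; norm_num)).eq v w
  have := LinearIsometryEquiv.comp_fderiv (𝕜 := ℝ) (E := E →L[ℝ] E →L[ℝ] F)
    (F := E →L[ℝ] E →L[ℝ] F) (ContinuousLinearMap.flipₗᵢ ℝ E E F)
    (f := fderiv ℝ (fderiv ℝ h)) (x := y)
  rw [← hflip] at this
  exact congr($this u v w)

end RealDerivatives

local notation "ℝ²" => Fin 2 → ℝ

theorem linearMap_apply_fin_two {M : Type*} [AddCommMonoid M] [Module ℝ M] (L : ℝ² →ₗ[ℝ] M)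
    (v : ℝ²) : L v = v 0 • L (Pi.single 0 1) + v 1 • L (Pi.single 1 1) := by
  conv_lhs => rw [pi_eq_sum_univ' v]
  simp [Fin.sum_univ_two]

theorem map_rotate_comp_eq_det_smul (A : ℝ² →ₗ[ℝ] ℝ²) (L : ℝ² →ₗ[ℝ] ℝ) :
    A ![L (A (Pi.single 1 1)), -L (A (Pi.single 0 1))] =
      LinearMap.det A • ![L (Pi.single 1 1), -L (Pi.single 0 1)] := by
  rw [← LinearMap.det_toMatrix', Matrix.det_fin_two, linearMap_apply_fin_two A ![_, _],
    linearMap_apply_fin_two L (A _), linearMap_apply_fin_two L (A _)]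
  ext i
  fin_cases i <;> simp [LinearMap.toMatrix'_apply] <;> ring

theorem pd2_eq_fderiv_fderiv (h : ℝ² → ℝ) (i j : Fin 2) (y : ℝ²) :
    pd2 h i j y = fderiv ℝ (fderiv ℝ h) y (Pi.single i 1) (Pi.single j 1) :=
  iteratedFDeriv_two_apply _ _ _

theorem pd3_eq_fderiv_fderiv_fderiv (h : ℝ² → ℝ) (i j k : Fin 2) (y : ℝ²) :
    pd3 h i j k y =
      fderiv ℝ (fderiv ℝ (fderiv ℝ h)) y (Pi.single i 1) (Pi.single j 1) (Pi.single k 1) :=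
  iteratedFDeriv_three_apply_s12 _ _ _

theorem wrot_eq_smul_sub_smul (h : ℝ² → ℝ) (y : ℝ²) :
    wrot h y = pd1 h 1 y • Pi.single 0 1 - pd1 h 0 y • Pi.single 1 1 := by
  ext i; fin_cases i <;> simp [wrot]

theorem K2_eq_iteratedFDeriv {h : ℝ² → ℝ} {y : ℝ²} (hh : ContDiffAt ℝ 2 h y) :
    K2 h y = 1 / 2 * iteratedFDeriv ℝ 2 h y (fun _ => wrot h y) := by
  rw [iteratedFDeriv_two_apply, wrot_eq_smul_sub_smul]
  simp only [map_sub, map_smul, sub_apply, smul_apply, smul_eq_mul]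
  rw [(hh.isSymmSndFDerivAt (by simp)).eq (Pi.single 1 1)]
  simp only [K2, pd2_eq_fderiv_fderiv]
  ring

theorem K3_eq_iteratedFDeriv {h : ℝ² → ℝ} (hh : ContDiff ℝ 3 h) (y : ℝ²) :
    K3 h y = 1 / 6 * iteratedFDeriv ℝ 3 h y (fun _ => wrot h y) := by
  rw [iteratedFDeriv_three_apply_s12, wrot_eq_smul_sub_smul]
  simp only [map_sub, map_smul, sub_apply, smul_apply, smul_eq_mul]
  have hl := fderiv_fderiv_fderiv_comm_left hh y
  have hr := fderiv_fderiv_fderiv_comm_right hh y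
  -- sort the directions of every mixed third derivative into the order used by `K3`
  rw [hr (Pi.single 1 1) (Pi.single 1 1), hl (Pi.single 1 1) (Pi.single 0 1),
    hl (Pi.single 1 1) (Pi.single 0 1), hr (Pi.single 0 1) (Pi.single 1 1)]
  simp only [K3, pd3_eq_fderiv_fderiv_fderiv]
  ring

theorem pd1_comp_linearMap {h : ℝ² → ℝ} (A : ℝ² →ₗ[ℝ] ℝ²) {x : ℝ²}
    (hh : DifferentiableAt ℝ h (A x)) (i : Fin 2) :
    pd1 (fun y => h (A y)) i x = fderiv ℝ h (A x) (A (Pi.single i 1)) := by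
  have := (hh.hasFDerivAt.comp x A.toContinuousLinearMap.hasFDerivAt).fderiv
  simpa [pd1, Function.comp_def] using congr($this (Pi.single i 1))

theorem map_wrot_comp_linearMap {h : ℝ² → ℝ} (A : ℝ² →ₗ[ℝ] ℝ²) {x : ℝ²}
    (hh : DifferentiableAt ℝ h (A x)) :
    A (wrot (fun y => h (A y)) x) = LinearMap.det A • wrot h (A x) := by
  simp only [wrot, pd1_comp_linearMap A hh]
  exact map_rotate_comp_eq_det_smul A (fderiv ℝ h (A x)).toLinearMap

theorem K2_comp_linearMap {h : ℝ² → ℝ} (hh : ContDiff ℝ 2 h) (A : ℝ² →ₗ[ℝ] ℝ²) (x : ℝ²) :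
    K2 (fun y => h (A y)) x = LinearMap.det A ^ 2 * K2 h (A x) := by
  have hhA : ContDiff ℝ 2 (fun y => h (A y)) := hh.comp A.toContinuousLinearMap.contDiff
  rw [K2_eq_iteratedFDeriv hhA.contDiffAt, K2_eq_iteratedFDeriv hh.contDiffAt,
    iteratedFDeriv_comp_linearMap_apply_const hh,
    map_wrot_comp_linearMap A (hh.differentiable (by norm_num) _),
    ContinuousMultilinearMap.map_smul_const]
  simp only [Fintype.card_fin, smul_eq_mul]
  ring

theorem K3_comp_linearMap {h : ℝ² → ℝ} (hh : ContDiff ℝ 3 h) (A : ℝ² →ₗ[ℝ] ℝ²) (x : ℝ²) :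
    K3 (fun y => h (A y)) x = LinearMap.det A ^ 3 * K3 h (A x) := by
  have hhA : ContDiff ℝ 3 (fun y => h (A y)) := hh.comp A.toContinuousLinearMap.contDiff
  rw [K3_eq_iteratedFDeriv hhA, K3_eq_iteratedFDeriv hh,
    iteratedFDeriv_comp_linearMap_apply_const hh,
    map_wrot_comp_linearMap A (hh.differentiable (by norm_num) _),
    ContinuousMultilinearMap.map_smul_const]
  simp only [Fintype.card_fin, smul_eq_mul]
  ring

theorem lamhat_equivariance_general (h : (Fin 2 → ℝ) → ℝ) (hh : ContDiff ℝ 3 h)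
    (A : (Fin 2 → ℝ) →ₗ[ℝ] (Fin 2 → ℝ)) (hA : LinearMap.det A ≠ 0)
    (x : Fin 2 → ℝ) :
    A (lamhat (fun y => h (A y)) x) = lamhat h (A x) := by
  rw [lamhat, lamhat, map_smul, map_wrot_comp_linearMap A (hh.differentiable (by norm_num) _),
    K2_comp_linearMap (hh.of_le (by norm_num)), K3_comp_linearMap hh, smul_smul]
  congr 1
  set d := LinearMap.det A
  calc 3 * (d ^ 3 * K3 h (A x)) / (2 * (d ^ 2 * K2 h (A x)) ^ 2) * d
      = d ^ 4 * (3 * K3 h (A x)) / (d ^ 4 * (2 * K2 h (A x) ^ 2)) := by ring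
    _ = 3 * K3 h (A x) / (2 * K2 h (A x) ^ 2) := mul_div_mul_left _ _ (pow_ne_zero 4 hA)

/-- Equivariance of the invariant vector field `λ̂` under linear changes of variables:
`A(λ̂(h∘A)(x)) = λ̂(h)(Ax)`. -/
theorem lamhat_equivariance (h : (Fin 2 → ℝ) → ℝ) (hh : ContDiff ℝ 3 h)
    (A : (Fin 2 → ℝ) →ₗ[ℝ] (Fin 2 → ℝ)) (hA : LinearMap.det A ≠ 0)
    (x : Fin 2 → ℝ) (hx : K2 h (A x) ≠ 0) :
    A (lamhat (fun y => h (A y)) x) = lamhat h (A x) :=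
  lamhat_equivariance_general h hh A hA x
end

section
/- For all natural numbers n ≥ 2 and k ≥ 3, the inequality C(n + k − 1, k) ≥ n² + n holds if and only if (n, k) is none of the three pairs (2,3), (2,4), (3,3). Equivalently, the codimension c(n,k) = C(n+k−1, k) − n² of a regular GL(n)-orbit in the space of homogeneous n-ary forms of degree k satisfies c(n,k) ≥ n for all n ≥ 2, k ≥ 3 except exactly in the three cases n = 2, k = 3; n = 2, k = 4; n = 3, k = 3. -/
lemma aux_cube : ∀ m : ℕ, (m + 4) ^ 2 + (m + 4) ≤ Nat.choose (m + 6) 3 := by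
  intro m
  induction m with
  | zero => decide
  | succ m ih =>
      have h : Nat.choose (m + 7) 3 = Nat.choose (m + 6) 3 + Nat.choose (m + 6) 2 := by
        rw [show (m + 7) = (m + 6) + 1 from rfl, show (3:ℕ) = 2 + 1 from rfl,
          Nat.choose_succ_succ]
        exact Nat.add_comm _ _
      have h2 : 2 * m + 10 ≤ Nat.choose (m + 6) 2 := by
        rw [Nat.choose_two_right]
        have e : m + 6 - 1 = m + 5 := rfl
        rw [e, Nat.le_div_iff_mul_le (by norm_num)]
        nlinarith
      calc (m + 1 + 4) ^ 2 + (m + 1 + 4)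
          = ((m + 4) ^ 2 + (m + 4)) + (2 * m + 10) := by ring
        _ ≤ Nat.choose (m + 6) 3 + Nat.choose (m + 6) 2 := Nat.add_le_add ih h2
        _ = Nat.choose (m + 7) 3 := h.symm

/-- For `n ≥ 2` and `k ≥ 3` the codimension `c(n,k) = C(n+k−1,k) − n²` of a regular
`GL(n)`-orbit in the space of homogeneous `n`-ary forms of degree `k` satisfies
`c(n,k) ≥ n`, i.e. `C(n+k−1, k) ≥ n² + n`, except exactly in the three cases
`(n,k) = (2,3), (2,4), (3,3)`. -/
theorem codim_regular_orbits (n k : ℕ) (hn : 2 ≤ n) (hk : 3 ≤ k) :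
    n ^ 2 + n ≤ Nat.choose (n + k - 1) k ↔
      ¬((n = 2 ∧ k = 3) ∨ (n = 2 ∧ k = 4) ∨ (n = 3 ∧ k = 3)) := by
  constructor
  · intro h hc
    rcases hc with ⟨hn', hk'⟩ | ⟨hn', hk'⟩ | ⟨hn', hk'⟩ <;> subst hn' <;> subst hk' <;>
      revert h <;> decide
  · intro hne
    have hsym : Nat.choose (n + k - 1) k = Nat.choose (n + k - 1) (n - 1) := by
      have h1 : k ≤ n + k - 1 := by omega
      have h2 : n + k - 1 - k = n - 1 := by omega
      rw [← Nat.choose_symm h1, h2]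
    rw [hsym]
    rcases Nat.lt_or_ge n 4 with h4 | h4
    · interval_cases n
      · -- n = 2 : choose (k+1) 1 = k+1, need ≥ 6, k ≥ 5
        have hk5 : 5 ≤ k := by
          rcases Nat.lt_or_ge k 5 with h | h
          · interval_cases k <;> simp_all
          · exact h
        have : 2 + k - 1 = k + 1 := by omega
        rw [this, Nat.choose_one_right]
        omega
      · -- n = 3 : choose (k+2) 2 ≥ 12, k ≥ 4
        have hk4 : 4 ≤ k := by
          rcases Nat.lt_or_ge k 4 with h | h
          · interval_cases k <;> simp_all
          · exact h
        have : 3 + k - 1 = k + 2 := by omega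
        rw [this]
        calc (3:ℕ) ^ 2 + 3 ≤ Nat.choose 6 2 := by decide
          _ ≤ Nat.choose (k + 2) 2 := Nat.choose_le_choose 2 (by omega)
    · -- n ≥ 4
      have h1 : n ^ 2 + n ≤ Nat.choose (n + 2) 3 := by
        have := aux_cube (n - 4)
        have e : n - 4 + 4 = n := by omega
        have e2 : n - 4 + 6 = n + 2 := by omega
        rwa [e, e2] at this
      have h2 : Nat.choose (n + 2) 3 = Nat.choose (n + 2) (n - 1) := by
        have e : n - 1 = n + 2 - 3 := by omega
        rw [e, Nat.choose_symm (by omega)]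
      have h3 : Nat.choose (n + 2) (n - 1) ≤ Nat.choose (n + k - 1) (n - 1) :=
        Nat.choose_le_choose _ (by omega)
      omega
end

section
/- Let n, k ∈ ℕ and let f : ℝⁿ → ℝ be C^(k+1) with identically vanishing (k+1)-st iterated derivative (iteratedFDeriv ℝ (k+1) f x = 0 for all x) and satisfying the Euler identity Df(x)(x) = k · f(x) for all x ∈ ℝⁿ. Then f(t • x) = t^k · f(x) for every real t (of arbitrary sign) and every x ∈ ℝⁿ; i.e. f is a homogeneous function of degree k on all of ℝⁿ. -/
/-!
Restrict `f` to the line through `x`: `g t = f (t • x)` has vanishing `(k+1)`-st derivative and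
satisfies the one-variable Euler identity `t g' = k g`. Differentiating that identity gives
`t g'' = (k - 1) g'`, so by induction on `k` we get `g' t = t ^ (k - 1) g' 1 = k t ^ (k - 1) g 1`,
and integrating from `1` gives `g t = t ^ k g 1` for every real `t`, negative ones included.
-/

section Line

variable {F : Type*} [NormedAddCommGroup F] [NormedSpace ℝ F]

theorem smul_deriv_deriv_eq_of_smul_deriv_eq {h : ℝ → F} {c : ℝ} (hh : Differentiable ℝ h)
    (hh' : Differentiable ℝ (deriv h)) (heuler : ∀ t, t • deriv h t = c • h t) (t : ℝ) :
    t • deriv (deriv h) t = (c - 1) • deriv h t := by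
  have hprod :
      HasDerivAt (fun u => u • deriv h u) (t • deriv (deriv h) t + (1 : ℝ) • deriv h t) t :=
    (hasDerivAt_id t).smul (hh' t).hasDerivAt
  rw [funext heuler] at hprod
  have hsum := hprod.unique ((hh t).hasDerivAt.const_smul c)
  rw [sub_smul, ← hsum, add_sub_cancel_right]

theorem apply_eq_pow_succ_smul_of_deriv_eq {h : ℝ → F} {k : ℕ} (hh : Differentiable ℝ h)
    (hderiv : ∀ t, deriv h t = t ^ k • deriv h 1) (hderiv_one : deriv h 1 = (k + 1 : ℝ) • h 1)
    (t : ℝ) : h t = t ^ (k + 1) • h 1 := by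
  have hmonomial : ∀ s, HasDerivAt (fun u : ℝ => u ^ (k + 1) • h 1) (deriv h s) s := by
    intro s
    convert (hasDerivAt_pow (k + 1) s).smul_const (h 1) using 1
    rw [hderiv, hderiv_one, smul_smul]
    push_cast
    ring_nf
  have hconst : ∀ s, deriv (fun u => h u - u ^ (k + 1) • h 1) s = 0 := fun s =>
    ((hh s).hasDerivAt.sub (hmonomial s)).deriv.trans (sub_self _)
  have := is_const_of_deriv_eq_zero
    (hh.sub fun s => (hmonomial s).differentiableAt) hconst t 1
  simpa [sub_eq_zero] using this

theorem apply_eq_pow_smul_apply_one_of_euler {h : ℝ → F} {k : ℕ} (hh : ContDiff ℝ (k + 1) h)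
    (hvan : ∀ t, iteratedDeriv (k + 1) h t = 0) (heuler : ∀ t, t • deriv h t = (k : ℝ) • h t)
    (t : ℝ) : h t = t ^ k • h 1 := by
  induction k generalizing h t with
  | zero =>
    have hderiv : ∀ s, deriv h s = 0 := by simpa using hvan
    simpa using is_const_of_deriv_eq_zero (hh.differentiable one_ne_zero) hderiv t 1
  | succ k ih =>
    have hh' : ContDiff ℝ (k + 1) (deriv h) := (contDiff_succ_iff_deriv.1 hh).2.2
    have hderiv_euler : ∀ s, s • deriv (deriv h) s = (k : ℝ) • deriv h s := by
      intro s
      rw [smul_deriv_deriv_eq_of_smul_deriv_eq (hh.differentiable (by simp))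
        (hh'.differentiable (by simp)) heuler]
      push_cast
      ring_nf
    refine apply_eq_pow_succ_smul_of_deriv_eq (hh.differentiable (by simp))
      (ih hh' (fun s => by rw [← iteratedDeriv_succ']; exact hvan s) hderiv_euler) ?_ t
    simpa using heuler 1

end Line

section Restriction

variable {E F : Type*} [NormedAddCommGroup E] [NormedSpace ℝ E] [NormedAddCommGroup F]
  [NormedSpace ℝ F]

theorem iteratedDeriv_comp_smul_const {f : E → F} {n : ℕ} (hf : ContDiff ℝ n f) (x : E)
    (t : ℝ) :
    iteratedDeriv n (fun s : ℝ => f (s • x)) t = iteratedFDeriv ℝ n f (t • x) (fun _ => x) := by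
  have := (ContinuousLinearMap.toSpanSingleton ℝ x).iteratedFDeriv_comp_right hf t le_rfl
  rw [iteratedDeriv_eq_iteratedFDeriv]
  simp only [Function.comp_def, ContinuousLinearMap.toSpanSingleton_apply] at this
  simp only [this, ContinuousMultilinearMap.compContinuousLinearMap_apply,
    ContinuousLinearMap.toSpanSingleton_apply, one_smul]

theorem deriv_comp_smul_const {f : E → F} {x : E} {t : ℝ} (hf : DifferentiableAt ℝ f (t • x)) :
    deriv (fun s : ℝ => f (s • x)) t = fderiv ℝ f (t • x) x :=
  (hf.hasFDerivAt.comp_hasDerivAt t ((hasDerivAt_id t).smul_const x)).deriv.trans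
    (by rw [one_smul])

end Restriction

/-- A `C^(k+1)` function `f : ℝⁿ → ℝ` whose `(k+1)`-st iterated derivative vanishes
identically (i.e. a polynomial function of degree `≤ k`) and which satisfies the Euler
identity `Df(x)(x) = k·f(x)` everywhere is homogeneous of degree `k` on all of `ℝⁿ`:
`f(t • x) = t^k · f(x)` for every real `t` and every `x`. -/
theorem euler_polynomial_homogeneous (n k : ℕ) (f : (Fin n → ℝ) → ℝ)
    (hf : ContDiff ℝ (k + 1) f)
    (hvan : ∀ x : Fin n → ℝ, iteratedFDeriv ℝ (k + 1) f x = 0)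
    (heuler : ∀ x : Fin n → ℝ, fderiv ℝ f x x = k * f x) :
    ∀ (t : ℝ) (x : Fin n → ℝ), f (t • x) = t ^ k * f x := by
  intro t x
  have hdiff : Differentiable ℝ f := hf.differentiable (by simp)
  have hline_vanish : ∀ s, iteratedDeriv (k + 1) (fun s : ℝ => f (s • x)) s = 0 := fun s => by
    rw [iteratedDeriv_comp_smul_const hf, hvan]; rfl
  have hline_euler : ∀ s : ℝ, s • deriv (fun s : ℝ => f (s • x)) s = (k : ℝ) • f (s • x) :=
    fun s => by rw [deriv_comp_smul_const (hdiff _), ← map_smul, heuler, smul_eq_mul]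
  simpa using apply_eq_pow_smul_apply_one_of_euler (hf.comp (contDiff_id.smul contDiff_const))
    hline_vanish hline_euler t
end
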